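/- Let q = n/(n−α) for α ∈ [0,n), and let Ω be homogeneous of degree zero satisfying the L^q-Dini condition (∫₀¹ ω_q(t)/t dt < ∞ where ω_q(t) = sup_{|h|≤t} (∫_{S^{n−1}} |Ω(x'+h)−Ω(x')|^q dσ(x'))^{1/q}). Then for every ρ > 0 and y ∈ ℝⁿ, ∫_{|x|>ρ} |Ω(x−y)−Ω(x)|^q / |x|ⁿ dx ≤ ∫₀^{|y|/ρ} ω_q(s)^q / s ds; consequently sup_{|y|≤δ} of the left side tends to 0 as δ → 0⁺. -/

import Mathlib

open MeasureTheory Metric Set Filter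
open scoped ENNReal Topology

/-- The `L^q` integral continuity modulus of `Ω`:
`ω_q(t) = sup_{|h| ≤ t} (∫_{S^{n-1}} |Ω(x'+h) - Ω(x')|^q dσ(x'))^{1/q}`. -/
noncomputable def omegaModQ (n : ℕ) (q : ℝ) (Ω : EuclideanSpace ℝ (Fin n) → ℝ) (t : ℝ) : ℝ≥0∞ :=
  ⨆ (h : EuclideanSpace ℝ (Fin n)) (_ : ‖h‖ ≤ t),
    (∫⁻ x' : sphere (0:EuclideanSpace ℝ (Fin n)) 1,
        ENNReal.ofReal
          (|Ω ((x' : EuclideanSpace ℝ (Fin n)) + h) - Ω (x' : EuclideanSpace ℝ (Fin n))| ^ q)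
        ∂(volume : Measure (EuclideanSpace ℝ (Fin n))).toSphere) ^ (1 / q)

/-!
In polar coordinates `x = r • u`, homogeneity of degree zero rewrites the spherical integral at
radius `r` as `∫_{S^{n-1}} |Ω(u - y/r) - Ω(u)|^q dσ(u) ≤ ω_q(|y|/r)^q`, and the radial weight
`r^{n-1} / r^n = 1/r` turns into `ds/s` under `s = |y|/r`. For the limit, `q ≥ 1` gives
`ω_q(s)^q ≤ ω_q(1/2)^{q-1} ω_q(s)` for small `s`, and `∫₀^ε ω_q(s)/s ds → 0` by absolute
continuity of the finite Dini integral.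
-/

theorem norm_smul_coe_sphere {E : Type*} [NormedAddCommGroup E] [NormedSpace ℝ E] {r : ℝ}
    (hr : 0 ≤ r) (u : sphere (0 : E) 1) : ‖r • (u : E)‖ = r := by
  rw [norm_smul, norm_eq_of_mem_sphere u, mul_one, Real.norm_of_nonneg hr]

section Polar

variable {E : Type*} [NormedAddCommGroup E] [NormedSpace ℝ E] [MeasurableSpace E] [BorelSpace E]
  [FiniteDimensional ℝ E] [Nontrivial E] (μ : Measure E) [μ.IsAddHaarMeasure]

theorem lintegral_eq_lintegral_Ioi_lintegral_toSphere {f : E → ℝ≥0∞} (hf : Measurable f) :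
    ∫⁻ x, f x ∂μ = ∫⁻ r in Ioi (0 : ℝ),
      ENNReal.ofReal (r ^ (Module.finrank ℝ E - 1)) * ∫⁻ u, f (r • (u : E)) ∂μ.toSphere := by
  set e := homeomorphUnitSphereProd E
  have hfe : Measurable fun p => f (e.symm p : E) :=
    hf.comp (measurable_subtype_coe.comp e.symm.measurable)
  calc ∫⁻ x, f x ∂μ = ∫⁻ x : ({0}ᶜ : Set E), f x ∂μ.comap (↑) := by
        rw [lintegral_subtype_comap (measurableSet_singleton _).compl, restrict_compl_singleton]
    _ = ∫⁻ p, f (e.symm p : E) ∂μ.toSphere.prod (.volumeIoiPow (Module.finrank ℝ E - 1)) := by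
        rw [← μ.measurePreserving_homeomorphUnitSphereProd.lintegral_comp_emb
          e.measurableEmbedding]
        simp only [e, Homeomorph.symm_apply_apply]
    _ = ∫⁻ r, ∫⁻ u, f (r.1 • (u : E)) ∂μ.toSphere ∂.volumeIoiPow (Module.finrank ℝ E - 1) :=
        lintegral_prod_symm' _ hfe
    _ = _ := by
        rw [Measure.volumeIoiPow, lintegral_withDensity_eq_lintegral_mul_non_measurable _
          (measurable_subtype_coe.pow_const _).ennreal_ofReal
          (.of_forall fun _ => ENNReal.ofReal_lt_top),
          ← lintegral_subtype_comap measurableSet_Ioi]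
        rfl

theorem setLIntegral_norm_gt_eq_lintegral_Ioi_lintegral_toSphere {f : E → ℝ≥0∞}
    (hf : Measurable f) {ρ : ℝ} (hρ : 0 ≤ ρ) :
    ∫⁻ x in {x : E | ρ < ‖x‖}, f x ∂μ = ∫⁻ r in Ioi ρ,
      ENNReal.ofReal (r ^ (Module.finrank ℝ E - 1)) * ∫⁻ u, f (r • (u : E)) ∂μ.toSphere := by
  have hS : MeasurableSet {x : E | ρ < ‖x‖} := measurableSet_lt measurable_const measurable_norm
  rw [← lintegral_indicator hS, lintegral_eq_lintegral_Ioi_lintegral_toSphere μ (hf.indicator hS)]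
  calc _ = ∫⁻ r in Ioi 0, (Ioi ρ).indicator (fun r => ENNReal.ofReal (r ^ (Module.finrank ℝ E - 1))
          * ∫⁻ u, f (r • (u : E)) ∂μ.toSphere) r :=
        setLIntegral_congr_fun measurableSet_Ioi fun r hr => by
          by_cases hrρ : ρ < r <;> simp [norm_smul_coe_sphere hr.le, hrρ]
    _ = _ := by
        rw [lintegral_indicator measurableSet_Ioi, Measure.restrict_restrict measurableSet_Ioi,
          inter_eq_left.2 (Ioi_subset_Ioi hρ)]

end Polar

theorem lintegral_Ioi_comp_div_div {a ρ : ℝ} (ha : 0 < a) (hρ : 0 < ρ) (f : ℝ → ℝ≥0∞) :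
    ∫⁻ t in Ioi ρ, f (a / t) / ENNReal.ofReal t =
      ∫⁻ s in Ioo 0 (a / ρ), f s / ENNReal.ofReal s := by
  have himage : (a / ·) '' Ioi ρ = Ioo 0 (a / ρ) := by
    ext s
    simp only [mem_image, mem_Ioi, mem_Ioo]
    constructor
    · rintro ⟨t, ht, rfl⟩
      exact ⟨div_pos ha (hρ.trans ht), div_lt_div_of_pos_left ha hρ ht⟩
    · rintro ⟨hs0, hs⟩
      refine ⟨a / s, (lt_div_comm₀ hs0 hρ).1 hs, div_div_cancel₀ ha.ne'⟩
  have hderiv : ∀ t ∈ Ioi ρ, HasDerivWithinAt (a / ·) (-(a / t ^ 2)) (Ioi ρ) t := fun t ht => by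
    simpa [div_eq_mul_inv] using
      ((hasDerivAt_inv (hρ.trans ht).ne').const_mul a).hasDerivWithinAt
  have hanti : AntitoneOn (a / ·) (Ioi ρ) := fun s hs t _ hst =>
    div_le_div_of_nonneg_left ha.le (hρ.trans hs) hst
  rw [← himage, lintegral_image_eq_lintegral_deriv_mul_of_antitoneOn measurableSet_Ioi hderiv hanti]
  refine setLIntegral_congr_fun measurableSet_Ioi fun t ht => ?_
  have ht0 : 0 < t := hρ.trans ht
  rw [neg_neg, show a / t ^ 2 = a / t * t⁻¹ by ring, ENNReal.ofReal_mul (div_pos ha ht0).le,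
    ENNReal.ofReal_inv_of_pos ht0, mul_comm (ENNReal.ofReal (a / t)), mul_assoc,
    ENNReal.mul_div_cancel (ENNReal.ofReal_pos.2 (div_pos ha ht0)).ne' ENNReal.ofReal_ne_top,
    ENNReal.div_eq_inv_mul]

theorem tendsto_setLIntegral_Ioo_nhdsGT_zero {f : ℝ → ℝ≥0∞} {b : ℝ} (hb : 0 < b)
    (hf : ∫⁻ s in Ioo 0 b, f s ≠ ∞) :
    Tendsto (fun ε => ∫⁻ s in Ioo 0 ε, f s) (𝓝[>] 0) (𝓝 0) := by
  have hvol : Tendsto (fun ε => volume.restrict (Ioo 0 b) (Ioo 0 ε)) (𝓝[>] (0 : ℝ)) (𝓝 0) := by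
    refine tendsto_of_tendsto_of_tendsto_of_le_of_le tendsto_const_nhds ?_ (fun _ => zero_le)
      fun ε => (Measure.restrict_apply_le _ _).trans_eq Real.volume_Ioo
    simpa using (ENNReal.tendsto_ofReal (tendsto_id (x := 𝓝 (0 : ℝ)))).mono_left nhdsWithin_le_nhds
  refine (tendsto_setLIntegral_zero hf hvol).congr' ?_
  filter_upwards [Ioo_mem_nhdsGT hb] with ε hε
  rw [Measure.restrict_restrict measurableSet_Ioo, inter_eq_left.2 (Ioo_subset_Ioo_right hε.2.le)]

theorem ne_top_of_lintegral_Ioo_div_ne_top {ω : ℝ → ℝ≥0∞} (hω : Monotone ω)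
    (hint : ∫⁻ s in Ioo 0 1, ω s / ENNReal.ofReal s ≠ ∞) {t : ℝ} (ht0 : 0 ≤ t) (ht1 : t < 1) :
    ω t ≠ ∞ := by
  have hle : ∀ s ∈ Ioo t 1, ω t ≤ ω s / ENNReal.ofReal s := fun s hs =>
    calc ω t ≤ ω s := hω hs.1.le
      _ ≤ ω s * (ENNReal.ofReal s)⁻¹ :=
          le_mul_of_one_le_right' (ENNReal.one_le_inv.2 (ENNReal.ofReal_le_one.2 hs.2.le))
  have hbound : ω t * ENNReal.ofReal (1 - t) ≤ ∫⁻ s in Ioo 0 1, ω s / ENNReal.ofReal s :=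
    calc ω t * ENNReal.ofReal (1 - t) = ∫⁻ _ in Ioo t 1, ω t := by
          rw [setLIntegral_const, Real.volume_Ioo]
      _ ≤ ∫⁻ s in Ioo t 1, ω s / ENNReal.ofReal s := setLIntegral_mono' measurableSet_Ioo hle
      _ ≤ _ := lintegral_mono_set (Ioo_subset_Ioo_left ht0)
  intro htop
  rw [htop, ENNReal.top_mul (by simpa using ht1)] at hbound
  exact hint (top_le_iff.1 hbound)

theorem tendsto_setLIntegral_Ioo_rpow_div_nhdsGT_zero {ω : ℝ → ℝ≥0∞} (hω : Monotone ω) {q : ℝ}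
    (hq : 1 ≤ q) (hint : ∫⁻ s in Ioo 0 1, ω s / ENNReal.ofReal s ≠ ∞) :
    Tendsto (fun ε => ∫⁻ s in Ioo 0 ε, ω s ^ q / ENNReal.ofReal s) (𝓝[>] 0) (𝓝 0) := by
  set C := ω (1 / 2) ^ (q - 1)
  have hC : C ≠ ∞ := ENNReal.rpow_ne_top_of_nonneg (by linarith)
    (ne_top_of_lintegral_Ioo_div_ne_top hω hint (by norm_num) (by norm_num))
  have hsmall : Tendsto (fun ε => ∫⁻ s in Ioo 0 ε, ω s / ENNReal.ofReal s) (𝓝[>] 0) (𝓝 0) :=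
    tendsto_setLIntegral_Ioo_nhdsGT_zero one_pos hint
  have hbound : ∀ᶠ ε in 𝓝[>] (0 : ℝ), ∫⁻ s in Ioo 0 ε, ω s ^ q / ENNReal.ofReal s
      ≤ C * ∫⁻ s in Ioo 0 ε, ω s / ENNReal.ofReal s := by
    filter_upwards [Ioo_mem_nhdsGT (show (0 : ℝ) < 1 / 2 by norm_num)] with ε hε
    rw [← lintegral_const_mul' _ _ hC]
    refine setLIntegral_mono' measurableSet_Ioo fun s hs => ?_
    calc ω s ^ q / ENNReal.ofReal s = ω s ^ (q - 1) * (ω s / ENNReal.ofReal s) := by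
          rw [← mul_div_assoc]
          conv_lhs => rw [← sub_add_cancel q 1,
            ENNReal.rpow_add_of_nonneg _ _ (by linarith) zero_le_one, ENNReal.rpow_one]
      _ ≤ C * (ω s / ENNReal.ofReal s) :=
          mul_le_mul_left (ENNReal.rpow_le_rpow (hω (hs.2.trans hε.2).le) (by linarith)) _
  exact tendsto_of_tendsto_of_tendsto_of_le_of_le' tendsto_const_nhds
    (by simpa using ENNReal.Tendsto.const_mul hsmall (.inr hC)) (.of_forall fun _ => zero_le) hbound

theorem ENNReal.ofReal_pow_pred_mul_div_pow {n : ℕ} (hn : 0 < n) {r : ℝ} (hr : 0 < r)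
    (a : ℝ≥0∞) :
    ENNReal.ofReal (r ^ (n - 1)) * (a / ENNReal.ofReal (r ^ n)) = a / ENNReal.ofReal r := by
  have hpos := (ENNReal.ofReal_pos.2 (pow_pos hr (n - 1))).ne'
  rw [← pow_sub_one_mul hn.ne', ENNReal.ofReal_mul (pow_nonneg hr.le _), ← mul_div_assoc,
    ENNReal.mul_div_mul_left _ _ hpos ENNReal.ofReal_ne_top]

section OmegaModQ

variable {n : ℕ} {q : ℝ} {Ω : EuclideanSpace ℝ (Fin n) → ℝ}

theorem omegaModQ_mono : Monotone (omegaModQ n q Ω) := fun _ _ hst =>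
  iSup_mono fun _ => iSup_le fun hh => le_iSup_of_le (hh.trans hst) le_rfl

theorem lintegral_toSphere_le_omegaModQ_rpow (hq : 0 < q) {h : EuclideanSpace ℝ (Fin n)} {t : ℝ}
    (ht : ‖h‖ ≤ t) :
    ∫⁻ u : sphere (0 : EuclideanSpace ℝ (Fin n)) 1,
        ENNReal.ofReal (|Ω (u + h) - Ω u| ^ q) ∂(volume : Measure _).toSphere
      ≤ omegaModQ n q Ω t ^ q := by
  rw [← ENNReal.rpow_inv_le_iff hq, ← one_div]
  exact le_iSup₂_of_le h ht le_rfl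

theorem lintegral_toSphere_smul_sub_le_omegaModQ_rpow (hq : 0 < q)
    (hΩhom : ∀ s : ℝ, 0 < s → ∀ x, Ω (s • x) = Ω x) {r : ℝ} (hr : 0 < r)
    (y : EuclideanSpace ℝ (Fin n)) :
    ∫⁻ u : sphere (0 : EuclideanSpace ℝ (Fin n)) 1,
        ENNReal.ofReal (|Ω (r • (u : EuclideanSpace ℝ (Fin n)) - y)
          - Ω (r • (u : EuclideanSpace ℝ (Fin n)))| ^ q) ∂(volume : Measure _).toSphere
      ≤ omegaModQ n q Ω (‖y‖ / r) ^ q := by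
  have hrescale : ∀ u : EuclideanSpace ℝ (Fin n), r • u - y = r • (u + -(r⁻¹ • y)) := fun u => by
    rw [smul_add, smul_neg, smul_smul, mul_inv_cancel₀ hr.ne', one_smul, sub_eq_add_neg]
  simp only [hrescale, hΩhom r hr]
  refine lintegral_toSphere_le_omegaModQ_rpow hq (le_of_eq ?_)
  rw [norm_neg, norm_smul, norm_inv, Real.norm_of_nonneg hr.le, inv_mul_eq_div]

theorem lintegral_norm_gt_le_lintegral_Ioi_omegaModQ (hn : 0 < n) (hq : 0 < q)
    (hΩm : Measurable Ω) (hΩhom : ∀ s : ℝ, 0 < s → ∀ x, Ω (s • x) = Ω x) {ρ : ℝ} (hρ : 0 < ρ)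
    (y : EuclideanSpace ℝ (Fin n)) :
    ∫⁻ x in {x : EuclideanSpace ℝ (Fin n) | ρ < ‖x‖},
        ENNReal.ofReal (|Ω (x - y) - Ω x| ^ q) / ENNReal.ofReal (‖x‖ ^ (n : ℝ))
      ≤ ∫⁻ r in Ioi ρ, omegaModQ n q Ω (‖y‖ / r) ^ q / ENNReal.ofReal r := by
  have : Nontrivial (EuclideanSpace ℝ (Fin n)) :=
    Module.nontrivial_of_finrank_pos (R := ℝ) (by rwa [finrank_euclideanSpace_fin])
  rw [setLIntegral_norm_gt_eq_lintegral_Ioi_lintegral_toSphere _ (by fun_prop) hρ.le,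
    finrank_euclideanSpace_fin]
  refine setLIntegral_mono' measurableSet_Ioi fun r (hρr : ρ < r) => ?_
  have hr : 0 < r := hρ.trans hρr
  simp only [norm_smul_coe_sphere hr.le, Real.rpow_natCast, ENNReal.div_eq_inv_mul]
  rw [lintegral_const_mul' _ _ (ENNReal.inv_ne_top.2 (ENNReal.ofReal_pos.2 (pow_pos hr n)).ne'),
    ← ENNReal.div_eq_inv_mul, ENNReal.ofReal_pow_pred_mul_div_pow hn hr, ENNReal.div_eq_inv_mul]
  exact mul_le_mul_right (lintegral_toSphere_smul_sub_le_omegaModQ_rpow hq hΩhom hr y) _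

theorem lintegral_norm_gt_le_lintegral_omegaModQ (hn : 0 < n) (hq : 0 < q) (hΩm : Measurable Ω)
    (hΩhom : ∀ s : ℝ, 0 < s → ∀ x, Ω (s • x) = Ω x) {ρ : ℝ} (hρ : 0 < ρ)
    (y : EuclideanSpace ℝ (Fin n)) :
    ∫⁻ x in {x : EuclideanSpace ℝ (Fin n) | ρ < ‖x‖},
        ENNReal.ofReal (|Ω (x - y) - Ω x| ^ q) / ENNReal.ofReal (‖x‖ ^ (n : ℝ))
      ≤ ∫⁻ s in Ioo 0 (‖y‖ / ρ), omegaModQ n q Ω s ^ q / ENNReal.ofReal s := by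
  rcases eq_or_ne y 0 with rfl | hy
  · simp [Real.zero_rpow hq.ne']
  rw [← lintegral_Ioi_comp_div_div (norm_pos_iff.2 hy) hρ]
  exact lintegral_norm_gt_le_lintegral_Ioi_omegaModQ hn hq hΩm hΩhom hρ y

end OmegaModQ

theorem stmt_14_general {n : ℕ} (α : ℝ) (hα0 : 0 ≤ α) (hαn : α < n)
    (Ω : EuclideanSpace ℝ (Fin n) → ℝ) (hΩm : Measurable Ω)
    (hΩhom : ∀ s : ℝ, 0 < s → ∀ x : EuclideanSpace ℝ (Fin n), Ω (s • x) = Ω x)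
    (hDini : (∫⁻ s in Set.Ioo (0:ℝ) 1,
        omegaModQ n ((n:ℝ) / ((n:ℝ) - α)) Ω s / ENNReal.ofReal s) < ⊤) :
    (∀ ρ : ℝ, 0 < ρ → ∀ y : EuclideanSpace ℝ (Fin n),
      (∫⁻ x in {x : EuclideanSpace ℝ (Fin n) | ρ < ‖x‖},
          ENNReal.ofReal (|Ω (x - y) - Ω x| ^ ((n:ℝ) / ((n:ℝ) - α)))
            / ENNReal.ofReal (‖x‖ ^ (n:ℝ)))
        ≤ ∫⁻ s in Set.Ioo (0:ℝ) (‖y‖ / ρ),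
            (omegaModQ n ((n:ℝ) / ((n:ℝ) - α)) Ω s) ^ ((n:ℝ) / ((n:ℝ) - α))
              / ENNReal.ofReal s) ∧
    (∀ ρ : ℝ, 0 < ρ →
      Tendsto (fun δ : ℝ =>
          ⨆ (y : EuclideanSpace ℝ (Fin n)) (_ : ‖y‖ ≤ δ),
            ∫⁻ x in {x : EuclideanSpace ℝ (Fin n) | ρ < ‖x‖},
              ENNReal.ofReal (|Ω (x - y) - Ω x| ^ ((n:ℝ) / ((n:ℝ) - α)))
                / ENNReal.ofReal (‖x‖ ^ (n:ℝ)))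
        (𝓝[>] (0:ℝ)) (𝓝 0)) := by
  have hn : 0 < n := by exact_mod_cast hα0.trans_lt hαn
  have hq : 1 ≤ (n : ℝ) / (n - α) := by rw [one_le_div (by linarith)]; linarith
  have hbound := fun ρ (hρ : 0 < ρ) y =>
    lintegral_norm_gt_le_lintegral_omegaModQ hn (zero_lt_one.trans_le hq) hΩm hΩhom hρ y
  refine ⟨hbound, fun ρ hρ => ?_⟩
  have htail := tendsto_setLIntegral_Ioo_rpow_div_nhdsGT_zero omegaModQ_mono hq hDini.ne
  have hscale : Tendsto (· / ρ) (𝓝[>] 0) (𝓝[>] 0) :=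
    tendsto_nhdsWithin_of_tendsto_nhds_of_eventually_within _
      (((continuous_id.div_const ρ).tendsto' 0 0 (zero_div ρ)).mono_left nhdsWithin_le_nhds)
      (eventually_nhdsWithin_of_forall fun _ hδ => div_pos hδ hρ)
  refine tendsto_of_tendsto_of_tendsto_of_le_of_le tendsto_const_nhds (htail.comp hscale)
    (fun _ => zero_le) fun δ => iSup₂_le fun y hy => (hbound ρ hρ y).trans ?_
  exact lintegral_mono_set (Ioo_subset_Ioo_right ((div_le_div_iff_of_pos_right hρ).2 hy))

/-- With `q = n/(n-α)` and `Ω` homogeneous of degree zero satisfying the `L^q`-Dini condition: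
`∫_{|x|>ρ} |Ω(x-y) - Ω(x)|^q/|x|^n dx ≤ ∫₀^{|y|/ρ} ω_q(s)^q/s ds` for all `ρ > 0`, `y`;
consequently `sup_{|y| ≤ δ}` of the left-hand side tends to `0` as `δ → 0⁺`. -/
theorem stmt_14 {n : ℕ} (α : ℝ) (hα0 : 0 ≤ α) (hαn : α < n)
    (Ω : EuclideanSpace ℝ (Fin n) → ℝ) (hΩm : Measurable Ω)
    (hΩhom : ∀ s : ℝ, 0 < s → ∀ x : EuclideanSpace ℝ (Fin n), Ω (s • x) = Ω x)
    (hΩLq : (∫⁻ x' : sphere (0:EuclideanSpace ℝ (Fin n)) 1,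
        ENNReal.ofReal (|Ω (x' : EuclideanSpace ℝ (Fin n))| ^ ((n:ℝ) / ((n:ℝ) - α)))
        ∂(volume : Measure (EuclideanSpace ℝ (Fin n))).toSphere) < ⊤)
    (hDini : (∫⁻ s in Set.Ioo (0:ℝ) 1,
        omegaModQ n ((n:ℝ) / ((n:ℝ) - α)) Ω s / ENNReal.ofReal s) < ⊤) :
    (∀ ρ : ℝ, 0 < ρ → ∀ y : EuclideanSpace ℝ (Fin n),
      (∫⁻ x in {x : EuclideanSpace ℝ (Fin n) | ρ < ‖x‖},
          ENNReal.ofReal (|Ω (x - y) - Ω x| ^ ((n:ℝ) / ((n:ℝ) - α)))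
            / ENNReal.ofReal (‖x‖ ^ (n:ℝ)))
        ≤ ∫⁻ s in Set.Ioo (0:ℝ) (‖y‖ / ρ),
            (omegaModQ n ((n:ℝ) / ((n:ℝ) - α)) Ω s) ^ ((n:ℝ) / ((n:ℝ) - α))
              / ENNReal.ofReal s) ∧
    (∀ ρ : ℝ, 0 < ρ →
      Tendsto (fun δ : ℝ =>
          ⨆ (y : EuclideanSpace ℝ (Fin n)) (_ : ‖y‖ ≤ δ),
            ∫⁻ x in {x : EuclideanSpace ℝ (Fin n) | ρ < ‖x‖},
              ENNReal.ofReal (|Ω (x - y) - Ω x| ^ ((n:ℝ) / ((n:ℝ) - α)))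
                / ENNReal.ofReal (‖x‖ ^ (n:ℝ)))
        (𝓝[>] (0:ℝ)) (𝓝 0)) :=
  stmt_14_general α hα0 hαn Ω hΩm hΩhom hDini
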